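/- arXiv:0710.1045 — 2 statements merged into one kernel-verified Lean document; each statement's English description precedes it below -/
import Mathlib

section
/- Let Z = ∑_{k=1}^∞ α_k² ζ_k² where ∑_{k=1}^∞ α_k² = 1, sup_k α_k² > 0, and ζ_k are i.i.d. standard normal. Then for all z ∈ (0,1), P(Z ≤ z) ≤ exp((1 − z + log z)/(2 sup_k α_k²)). -/
/-!
Chernoff's bound with `t = (1/z - 1) / (2σ)`, where `σ = supₖ αₖ²`. Since
`E exp(-s ζ²) = (1 + 2s)^(-1/2)` for standard normal `ζ`, independence gives
`E exp(-t Zₙ) = ∏ₖ (1 + pₖ (1/z - 1))^(-1/2)` for the partial sums `Zₙ`, with `pₖ = αₖ²/σ ∈ [0, 1]`;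
Bernoulli's inequality `(1/z)^p ≤ 1 + p (1/z - 1)` bounds each factor by `z^(pₖ/2)`.
As `Z ≥ Zₙ` almost surely, `P(Z ≤ z) ≤ P(Zₙ ≤ z)`, and letting `n → ∞` gives the bound.
-/
open MeasureTheory ProbabilityTheory Real Finset Filter
open scoped Topology ENNReal

-- For `t ≥ 1/2` both sides are junk zeros: the integral diverges and `√` of `0⁻¹ = 0` or of a
-- negative number is `0`.
lemma mgf_sq_gaussianReal (t : ℝ) :
    mgf (fun x => x ^ 2) (gaussianReal 0 1) t = √(1 - 2 * t)⁻¹ := by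
  have hdensity : ∀ x, gaussianPDFReal 0 1 x • exp (t * x ^ 2)
      = (√(2 * π))⁻¹ * exp (-(1 / 2 - t) * x ^ 2) := fun x => by
    rw [gaussianPDFReal, smul_eq_mul, mul_assoc, ← exp_add]
    congr 3 <;> simp only [NNReal.coe_one, mul_one, sub_zero]; ring
  rw [mgf, integral_gaussianReal_eq_integral_smul one_ne_zero]
  simp_rw [hdensity]
  rw [integral_const_mul, integral_gaussian, ← sqrt_inv, ← sqrt_mul (by positivity)]
  congr 1
  field_simp

lemma mgf_mul_sq_of_map_eq_gaussianReal {Ω : Type*} [MeasurableSpace Ω] {P : Measure Ω}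
    {ζ : Ω → ℝ} (hζ : AEMeasurable ζ P) (hlaw : P.map ζ = gaussianReal 0 1) (a t : ℝ) :
    mgf (fun ω => a * ζ ω ^ 2) P t = √(1 - 2 * (a * t))⁻¹ := by
  rw [mgf_const_mul, ← mgf_sq_gaussianReal, ← hlaw, mgf_map hζ (by fun_prop)]
  rfl

lemma sqrt_inv_one_add_mul_le_exp {z p : ℝ} (hz : 0 < z) (hp₀ : 0 ≤ p) (hp₁ : p ≤ 1) :
    √(1 + p * (z⁻¹ - 1))⁻¹ ≤ exp (p / 2 * log z) := by
  have hbernoulli : z⁻¹ ^ p ≤ 1 + p * (z⁻¹ - 1) := by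
    simpa using rpow_one_add_le_one_add_mul_self (s := z⁻¹ - 1) (by simp [hz.le]) hp₀ hp₁
  have hinv : (1 + p * (z⁻¹ - 1))⁻¹ ≤ z ^ p := by
    simpa [inv_rpow hz.le] using inv_anti₀ (by positivity) hbernoulli
  calc √(1 + p * (z⁻¹ - 1))⁻¹ ≤ √(z ^ p) := sqrt_le_sqrt hinv
    _ = exp (p / 2 * log z) := by
      rw [sqrt_eq_rpow, ← rpow_mul hz.le, rpow_def_of_pos hz]
      ring_nf

lemma ae_summable_mul_sq_of_map_eq {Ω : Type*} [MeasurableSpace Ω] {P : Measure Ω}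
    {μ : Measure ℝ} {c : ℕ → ℝ} (hc : Summable c) {ζ : ℕ → Ω → ℝ}
    (hζ : ∀ k, AEMeasurable (ζ k) P) (hlaw : ∀ k, P.map (ζ k) = μ)
    (hμ : Integrable (fun x => x ^ 2) μ) :
    ∀ᵐ ω ∂P, Summable fun k => c k * ζ k ω ^ 2 := by
  have hnorm : ∀ k, eLpNorm (fun ω => c k * ζ k ω ^ 2) 1 P
      = ‖c k‖ₑ * eLpNorm (fun x => x ^ 2) 1 μ := fun k => by
    rw [← hlaw k, eLpNorm_map_measure (by fun_prop) (hζ k)]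
    exact eLpNorm_const_smul (c k) _ 1 P
  have hsum : ∑' k, eLpNorm (fun ω => c k * ζ k ω ^ 2) 1 P ≠ ∞ := by
    simp_rw [hnorm, ENNReal.tsum_mul_right]
    exact ENNReal.mul_ne_top (tsum_enorm_ne_top_iff_summable_norm.2 hc.abs)
      (memLp_one_iff_integrable.2 hμ).eLpNorm_ne_top
  filter_upwards [summable_norm_of_tsum_eLpNorm_ne_top le_rfl (fun k => by fun_prop) hsum]
    with ω hω using hω.of_norm

lemma measureReal_sum_mul_sq_le {ι Ω : Type*} [MeasurableSpace Ω] {P : Measure Ω}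
    {ζ : ι → Ω → ℝ} (hindep : iIndepFun ζ P) (hζ : ∀ k, AEMeasurable (ζ k) P)
    (hlaw : ∀ k, P.map (ζ k) = gaussianReal 0 1) (α : ι → ℝ) (s : Finset ι) {σ z : ℝ}
    (hσ : 0 < σ) (hασ : ∀ k ∈ s, α k ^ 2 ≤ σ) (hz₀ : 0 < z) (hz₁ : z ≤ 1) :
    P.real {ω | ∑ k ∈ s, α k ^ 2 * ζ k ω ^ 2 ≤ z}
      ≤ exp ((1 - z + log z * ∑ k ∈ s, α k ^ 2) / (2 * σ)) := by
  have := hindep.isProbabilityMeasure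
  set t := (z⁻¹ - 1) / (2 * σ)
  have ht : 0 ≤ t := div_nonneg (by simp [one_le_inv₀ hz₀, hz₁]) (by positivity)
  set X : ι → Ω → ℝ := fun k ω => α k ^ 2 * ζ k ω ^ 2
  have hX : ∀ k, AEMeasurable (X k) P := fun k => by fun_prop
  have hXindep : iIndepFun X P := hindep.comp (fun k x => α k ^ 2 * x ^ 2) (fun k => by fun_prop)
  have hint : Integrable (fun ω => exp (-t * (∑ k ∈ s, X k) ω)) P := by
    refine (integrable_const 1).mono' (by fun_prop) (ae_of_all _ fun ω => ?_)
    rw [norm_of_nonneg (exp_nonneg _), exp_le_one_iff, Finset.sum_apply, neg_mul]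
    exact neg_nonpos.2 (mul_nonneg ht (sum_nonneg fun k _ => by positivity))
  have hfactor : ∀ k ∈ s, mgf (X k) P (-t) ≤ exp (α k ^ 2 / σ / 2 * log z) := fun k hk => by
    rw [mgf_mul_sq_of_map_eq_gaussianReal (hζ k) (hlaw k)]
    convert sqrt_inv_one_add_mul_le_exp hz₀ (by positivity) ((div_le_one hσ).2 (hασ k hk))
      using 3
    simp only [t]
    field_simp
    ring
  calc P.real {ω | ∑ k ∈ s, α k ^ 2 * ζ k ω ^ 2 ≤ z}
      ≤ exp (-(-t) * z) * mgf (∑ k ∈ s, X k) P (-t) := by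
        simpa [X, Finset.sum_apply] using measure_le_le_exp_mul_mgf z (neg_nonpos.2 ht) hint
    _ = exp (t * z) * ∏ k ∈ s, mgf (X k) P (-t) := by rw [hXindep.mgf_sum₀ hX, neg_neg]
    _ ≤ exp (t * z) * ∏ k ∈ s, exp (α k ^ 2 / σ / 2 * log z) := by
        gcongr with k hk
        · exact fun k _ => mgf_nonneg
        · exact hfactor k hk
    _ = exp ((1 - z + log z * ∑ k ∈ s, α k ^ 2) / (2 * σ)) := by
        rw [← exp_sum, ← exp_add, ← sum_mul, ← sum_div, ← sum_div]
        congr 1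
        simp only [t]
        field_simp

theorem weighted_chi_sq_lower_deviation_general
    {Ω : Type*} [MeasurableSpace Ω] (P : Measure Ω) [IsProbabilityMeasure P]
    (α : ℕ → ℝ) (hα : ∑' k, α k ^ 2 = 1) (hsup : 0 < ⨆ k, α k ^ 2)
    (ζ : ℕ → Ω → ℝ)
    (hindep : iIndepFun ζ P)
    (hlaw : ∀ k, P.map (ζ k) = gaussianReal 0 1)
    (Z : Ω → ℝ) (hZ : ∀ ω, Z ω = ∑' k, α k ^ 2 * ζ k ω ^ 2) :
    ∀ z, 0 < z → z < 1 →
      (P {ω | Z ω ≤ z}).toReal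
        ≤ Real.exp ((1 - z + Real.log z) / (2 * ⨆ k, α k ^ 2)) := by
  intro z hz₀ hz₁
  set σ := ⨆ k, α k ^ 2
  have hsum : Summable fun k => α k ^ 2 := by
    by_contra h
    simp [tsum_eq_zero_of_not_summable h] at hα
  have hασ : ∀ k, α k ^ 2 ≤ σ := le_ciSup ⟨1, by
    rintro _ ⟨k, rfl⟩
    exact hα ▸ hsum.le_tsum k fun j _ => sq_nonneg (α j)⟩
  have hζ : ∀ k, AEMeasurable (ζ k) P := fun k =>
    .of_map_ne_zero (by simp [hlaw k, IsProbabilityMeasure.ne_zero])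
  have hZ_ae := ae_summable_mul_sq_of_map_eq hsum hζ hlaw
    (memLp_id_gaussianReal 2).integrable_sq
  have hpartial : ∀ n, (P {ω | Z ω ≤ z}).toReal
      ≤ exp ((1 - z + log z * ∑ k ∈ range n, α k ^ 2) / (2 * σ)) := fun n => by
    refine le_trans ?_ (measureReal_sum_mul_sq_le hindep hζ hlaw α (range n) hsup
      (fun k _ => hασ k) hz₀ hz₁.le)
    refine ENNReal.toReal_mono (measure_ne_top _ _) (measure_mono_ae ?_)
    filter_upwards [hZ_ae] with ω hω hωz
    exact (hω.sum_le_tsum _ fun k _ => by positivity).trans ((hZ ω).symm.trans_le hωz)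
  have hlim : Tendsto (fun n => exp ((1 - z + log z * ∑ k ∈ range n, α k ^ 2) / (2 * σ)))
      atTop (𝓝 (exp ((1 - z + log z * 1) / (2 * σ)))) := by
    refine (continuous_exp.tendsto _).comp ((tendsto_const_nhds.add ?_).div_const _)
    exact (hα ▸ hsum.hasSum.tendsto_sum_nat).const_mul _
  simpa using ge_of_tendsto' hlim hpartial

/-- Lower deviation bound for a weighted chi-squared sum:
if `Z = ∑ₖ αₖ² ζₖ²` with `∑ₖ αₖ² = 1`, `supₖ αₖ² > 0`, and `ζₖ` i.i.d. standard
normal, then for all `z ∈ (0,1)`,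
`P(Z ≤ z) ≤ exp((1 - z + log z) / (2 supₖ αₖ²))`. -/
theorem weighted_chi_sq_lower_deviation
    {Ω : Type*} [MeasurableSpace Ω] (P : Measure Ω) [IsProbabilityMeasure P]
    (α : ℕ → ℝ) (hα : ∑' k, α k ^ 2 = 1) (hsup : 0 < ⨆ k, α k ^ 2)
    (ζ : ℕ → Ω → ℝ) (hmeas : ∀ k, Measurable (ζ k))
    (hindep : iIndepFun ζ P)
    (hlaw : ∀ k, P.map (ζ k) = gaussianReal 0 1)
    (Z : Ω → ℝ) (hZ : ∀ ω, Z ω = ∑' k, α k ^ 2 * ζ k ω ^ 2) :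
    ∀ z, 0 < z → z < 1 →
      (P {ω | Z ω ≤ z}).toReal
        ≤ Real.exp ((1 - z + Real.log z) / (2 * ⨆ k, α k ^ 2)) :=
  weighted_chi_sq_lower_deviation_general P α hα hsup ζ hindep hlaw Z hZ
end

section
/- Grant c_s·s(n) ≤ s(n+1) ≤ C_s·s(n), c_b·b(n+1) ≤ b(n) ≤ C_b·b(n+1) with 1 < c_s ≤ C_s, 1 < c_b ≤ C_b, and let χ: ℕ → (0,∞) satisfy c_χ·χ(n+1) ≤ χ(n) ≤ C_χ·χ(n+1) with c_b^{-1} < c_χ ≤ C_χ < c_s. Define a(n)² := χ(n)·((s(n+1) − s(n)) + (b(n) − b(n+1))). Then for every m ≥ 1, a(n#)²/a(n#+m)² ≤ ((C_b·C_s − 1)/(c_s − 1)) · (c_s/C_χ)^{−m}, where n# is the crossing index of s and b. -/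
/-- Geometric decay of the ratio of expected squared increments:
with `a(n)² = χ(n)·((s(n+1) − s(n)) + (b(n) − b(n+1)))`, for every `m ≥ 1`,
`a(n#)²/a(n#+m)² ≤ ((C_b C_s − 1)/(c_s − 1))·(c_s/C_χ)^{−m}`. -/
theorem increment_ratio_geometric_decay
    (s b χ : ℕ → ℝ) (hspos : ∀ n, 0 < s n) (hbpos : ∀ n, 0 < b n)
    (hχpos : ∀ n, 0 < χ n)
    (cs Cs cb Cb cχ Cχ : ℝ)
    (hcs : 1 < cs) (hcsCs : cs ≤ Cs) (hcb : 1 < cb) (hcbCb : cb ≤ Cb)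
    (hcχ : cb⁻¹ < cχ) (hcχCχ : cχ ≤ Cχ) (hCχ : Cχ < cs)
    (hsgeo : ∀ n, cs * s n ≤ s (n + 1) ∧ s (n + 1) ≤ Cs * s n)
    (hbgeo : ∀ n, cb * b (n + 1) ≤ b n ∧ b n ≤ Cb * b (n + 1))
    (hχgeo : ∀ n, cχ * χ (n + 1) ≤ χ n ∧ χ n ≤ Cχ * χ (n + 1))
    (nsharp : ℕ) (hcross1 : s nsharp ≤ b nsharp)
    (hcross2 : b (nsharp + 1) < s (nsharp + 1)) :
    ∀ m : ℕ, 1 ≤ m →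
      (χ nsharp * ((s (nsharp + 1) - s nsharp) + (b nsharp - b (nsharp + 1)))) /
        (χ (nsharp + m) *
          ((s (nsharp + m + 1) - s (nsharp + m)) +
            (b (nsharp + m) - b (nsharp + m + 1))))
      ≤ ((Cb * Cs - 1) / (cs - 1)) * (cs / Cχ) ^ (-(m : ℤ)) := by
  intro m _
  have hcs0 : (0:ℝ) < cs := lt_trans one_pos hcs
  have hcb0 : (0:ℝ) < cb := lt_trans one_pos hcb
  have hcχ0 : (0:ℝ) < cχ := lt_trans (inv_pos.mpr hcb0) hcχ
  have hCχ0 : (0:ℝ) < Cχ := lt_of_lt_of_le hcχ0 hcχCχ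
  -- growth of s
  have hs : ∀ k : ℕ, cs ^ k * s nsharp ≤ s (nsharp + k) := by
    intro k
    induction k with
    | zero => simp
    | succ k ih =>
      have h1 : cs * (cs ^ k * s nsharp) ≤ cs * s (nsharp + k) :=
        mul_le_mul_of_nonneg_left ih hcs0.le
      have h2 : cs * s (nsharp + k) ≤ s (nsharp + k + 1) := (hsgeo (nsharp + k)).1
      calc cs ^ (k + 1) * s nsharp = cs * (cs ^ k * s nsharp) := by ring
        _ ≤ s (nsharp + k + 1) := le_trans h1 h2
  -- growth of χ
  have hχ : ∀ k : ℕ, χ nsharp ≤ Cχ ^ k * χ (nsharp + k) := by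
    intro k
    induction k with
    | zero => simp
    | succ k ih =>
      have h1 : χ (nsharp + k) ≤ Cχ * χ (nsharp + k + 1) := (hχgeo (nsharp + k)).2
      have h2 : Cχ ^ k * χ (nsharp + k) ≤ Cχ ^ k * (Cχ * χ (nsharp + k + 1)) :=
        mul_le_mul_of_nonneg_left h1 (pow_nonneg hCχ0.le k)
      calc χ nsharp ≤ Cχ ^ k * χ (nsharp + k) := ih
        _ ≤ Cχ ^ k * (Cχ * χ (nsharp + k + 1)) := h2
        _ = Cχ ^ (k + 1) * χ (nsharp + k + 1) := by rw [pow_succ]; ring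
  -- numerator bound
  have hnum : (s (nsharp + 1) - s nsharp) + (b nsharp - b (nsharp + 1))
      ≤ (Cb * Cs - 1) * s nsharp := by
    have h1 := (hbgeo nsharp).2
    have h2 := (hsgeo nsharp).2
    have h3 := hcross2.le
    have hCb1 : (1:ℝ) ≤ Cb := le_trans hcb.le hcbCb
    nlinarith [mul_le_mul_of_nonneg_left h3 (sub_nonneg.mpr hCb1),
      mul_le_mul_of_nonneg_left h2 (le_trans zero_le_one hCb1)]
  -- denominator bound
  have hbdiff : 0 ≤ b (nsharp + m) - b (nsharp + m + 1) := by
    have h1 := (hbgeo (nsharp + m)).1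
    nlinarith [hbpos (nsharp + m + 1)]
  have hden : (cs - 1) * (cs ^ m * s nsharp)
      ≤ (s (nsharp + m + 1) - s (nsharp + m)) + (b (nsharp + m) - b (nsharp + m + 1)) := by
    have h1 := (hsgeo (nsharp + m)).1
    have h2 := hs m
    nlinarith [hspos (nsharp + m)]
  have hcs1 : (0:ℝ) < cs - 1 := sub_pos.mpr hcs
  have hcsm : (0:ℝ) < cs ^ m := pow_pos hcs0 m
  have hsn : 0 < s nsharp := hspos nsharp
  have hχ' : 0 < χ (nsharp + m) := hχpos (nsharp + m)
  have hDpos : 0 < χ (nsharp + m) *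
      ((s (nsharp + m + 1) - s (nsharp + m)) + (b (nsharp + m) - b (nsharp + m + 1))) := by
    have : 0 < (cs - 1) * (cs ^ m * s nsharp) := mul_pos hcs1 (mul_pos hcsm hsn)
    exact mul_pos hχ' (lt_of_lt_of_le this hden)
  have hrw : ((Cb * Cs - 1) / (cs - 1)) * (cs / Cχ) ^ (-(m : ℤ))
      = ((Cb * Cs - 1) * Cχ ^ m) / ((cs - 1) * cs ^ m) := by
    rw [zpow_neg, zpow_natCast, div_pow, inv_div, div_mul_div_comm]
  rw [hrw, div_le_div_iff₀ hDpos (mul_pos hcs1 hcsm)]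
  -- combine
  have hN : χ nsharp * ((s (nsharp + 1) - s nsharp) + (b nsharp - b (nsharp + 1)))
      ≤ Cχ ^ m * χ (nsharp + m) * ((Cb * Cs - 1) * s nsharp) := by
    have hNpos : 0 ≤ (s (nsharp + 1) - s nsharp) + (b nsharp - b (nsharp + 1)) := by
      have h1 := (hsgeo nsharp).1
      have h2 := (hbgeo nsharp).1
      nlinarith [hspos nsharp, hbpos (nsharp + 1)]
    calc χ nsharp * ((s (nsharp + 1) - s nsharp) + (b nsharp - b (nsharp + 1)))
        ≤ (Cχ ^ m * χ (nsharp + m)) * ((s (nsharp + 1) - s nsharp) + (b nsharp - b (nsharp + 1))) :=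
          mul_le_mul_of_nonneg_right (hχ m) hNpos
      _ ≤ Cχ ^ m * χ (nsharp + m) * ((Cb * Cs - 1) * s nsharp) :=
          mul_le_mul_of_nonneg_left hnum (mul_nonneg (pow_nonneg hCχ0.le m) hχ'.le)
  have hD : (cs - 1) * (cs ^ m * s nsharp) * χ (nsharp + m)
      ≤ χ (nsharp + m) *
        ((s (nsharp + m + 1) - s (nsharp + m)) + (b (nsharp + m) - b (nsharp + m + 1))) := by
    calc (cs - 1) * (cs ^ m * s nsharp) * χ (nsharp + m)
        = χ (nsharp + m) * ((cs - 1) * (cs ^ m * s nsharp)) := by ring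
      _ ≤ _ := mul_le_mul_of_nonneg_left hden hχ'.le
  have hK : 0 ≤ (Cb * Cs - 1) * Cχ ^ m := by
    have : (1:ℝ) < Cb * Cs := by nlinarith
    exact mul_nonneg (by linarith) (pow_nonneg hCχ0.le m)
  nlinarith [mul_le_mul_of_nonneg_right hN (mul_pos hcs1 hcsm).le,
    mul_le_mul_of_nonneg_left hD hK]
end
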